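/- Let E be a real inner product space and c ∈ E. For i = 1, …, N let pⁱ : Fin (mᵢ+1) → E be a chain with pⁱ_{mᵢ} = c and total length Lⁱ = ∑_{l=0}^{mᵢ−1} ‖pⁱ_{l+1} − pⁱ_l‖, and set L_max = max_i Lⁱ. Let p_o ∈ E and d_min ≥ 0, and suppose some point p* on some chain j (p* = pʲ_a + r·(pʲ_{a+1} − pʲ_a), a < m_j, r ∈ [0,1]) satisfies ‖p* − p_o‖ ≤ d_min. Let k₁, k₂ ≥ 0 and let v^i_l : ℝ → ℝ be measurable for each i and l < mᵢ. Then the team safety index F = ∑_{i=1}^{N} ∑_{l=0}^{mᵢ−1} ∫₀¹ ( k₁·‖pⁱ_l + r·(pⁱ_{l+1} − pⁱ_l) − p_o‖ + k₂·tanh(v^i_l(r)) ) dr satisfies F ≤ ∑_{i=1}^{N} [ k₁·( ((2mᵢ+1)/2)·Lⁱ + mᵢ·(L_max + d_min) ) + k₂·mᵢ ]. -/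

import Mathlib

open MeasureTheory

private lemma abs_tanh_le_one (x : ℝ) : |Real.tanh x| ≤ 1 := by
  rw [Real.tanh_eq_sinh_div_cosh, abs_div, abs_of_pos (Real.cosh_pos x),
    div_le_one (Real.cosh_pos x), abs_le, Real.sinh_eq, Real.cosh_eq]
  constructor <;> nlinarith [Real.exp_pos x, Real.exp_pos (-x)]

private lemma continuous_tanh' : Continuous Real.tanh := by
  have h : Real.tanh = fun x => Real.sinh x / Real.cosh x :=
    funext Real.tanh_eq_sinh_div_cosh
  rw [h]
  exact Real.continuous_sinh.div Real.continuous_cosh fun x => (Real.cosh_pos x).ne'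

private lemma seg_point_bound {E : Type*} [NormedAddCommGroup E] [NormedSpace ℝ E]
    {n : ℕ} (f : Fin (n + 1) → E) (a : Fin n) {r : ℝ} (hr : r ∈ Set.Icc (0:ℝ) 1) :
    ‖f a.castSucc + r • (f a.succ - f a.castSucc) - f (Fin.last n)‖
      ≤ ∑ l : Fin n, ‖f l.succ - f l.castSucc‖ := by
  obtain ⟨hr0, hr1⟩ := hr
  set g : ℕ → E := fun t => f ⟨min t n, Nat.lt_succ_of_le (min_le_right _ _)⟩ with hg
  have hga : g (a : ℕ) = f a.castSucc := by
    simp only [hg]; congr 1; ext; simp [min_eq_left (le_of_lt a.isLt)]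
  have hgb : g ((a : ℕ) + 1) = f a.succ := by
    simp only [hg]; congr 1; ext; simp [Nat.succ_le_of_lt a.isLt]
  have hgn : g n = f (Fin.last n) := by
    simp only [hg]; congr 1; ext; simp [Fin.last]
  have key : dist (g ((a:ℕ)+1)) (g n) ≤ ∑ i ∈ Finset.Ico ((a:ℕ)+1) n, dist (g i) (g (i+1)) :=
    dist_le_Ico_sum_dist g (Nat.succ_le_of_lt a.isLt)
  have h1 : dist (f a.castSucc + r • (f a.succ - f a.castSucc)) (f a.succ)
      ≤ dist (g (a:ℕ)) (g ((a:ℕ)+1)) := by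
    rw [hga, hgb, dist_eq_norm, dist_eq_norm]
    have : f a.castSucc + r • (f a.succ - f a.castSucc) - f a.succ
        = (r - 1) • (f a.succ - f a.castSucc) := by
      rw [sub_smul, one_smul]; abel
    rw [this, norm_smul, Real.norm_eq_abs, abs_of_nonpos (by linarith), norm_sub_rev]
    nlinarith [norm_nonneg (f a.castSucc - f a.succ)]
  have tri : dist (f a.castSucc + r • (f a.succ - f a.castSucc)) (f (Fin.last n))
      ≤ dist (f a.castSucc + r • (f a.succ - f a.castSucc)) (f a.succ)
        + dist (f a.succ) (f (Fin.last n)) := dist_triangle _ _ _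
  have step : dist (f a.castSucc + r • (f a.succ - f a.castSucc)) (f (Fin.last n))
      ≤ ∑ i ∈ Finset.Ico (a:ℕ) n, dist (g i) (g (i+1)) := by
    rw [Finset.sum_eq_sum_Ico_succ_bot a.isLt]
    calc dist (f a.castSucc + r • (f a.succ - f a.castSucc)) (f (Fin.last n))
        ≤ dist (g (a:ℕ)) (g ((a:ℕ)+1)) + dist (f a.succ) (f (Fin.last n)) := by
          refine tri.trans (add_le_add_left h1 _)
      _ ≤ _ := by
          apply add_le_add_right
          rw [← hgb, ← hgn]; exact key
  have hgl : ∀ l : Fin n, dist (g (l:ℕ)) (g ((l:ℕ)+1)) = ‖f l.succ - f l.castSucc‖ := by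
    intro l
    have h1 : g (l : ℕ) = f l.castSucc := by
      simp only [hg]; congr 1; ext; simp [min_eq_left (le_of_lt l.isLt)]
    have h2 : g ((l : ℕ) + 1) = f l.succ := by
      simp only [hg]; congr 1; ext; simp [Nat.succ_le_of_lt l.isLt]
    rw [h1, h2, dist_eq_norm, norm_sub_rev]
  have final : ∑ i ∈ Finset.Ico (a:ℕ) n, dist (g i) (g (i+1))
      ≤ ∑ l : Fin n, ‖f l.succ - f l.castSucc‖ := by
    calc ∑ i ∈ Finset.Ico (a:ℕ) n, dist (g i) (g (i+1))
        ≤ ∑ i ∈ Finset.range n, dist (g i) (g (i+1)) := by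
          apply Finset.sum_le_sum_of_subset_of_nonneg
          · intro x hx
            simp only [Finset.mem_Ico, Finset.mem_range] at *
            exact hx.2
          · intro _ _ _; exact dist_nonneg
      _ = ∑ l : Fin n, dist (g (l:ℕ)) (g ((l:ℕ)+1)) :=
          (Fin.sum_univ_eq_sum_range (fun i => dist (g i) (g (i+1))) n).symm
      _ = ∑ l : Fin n, ‖f l.succ - f l.castSucc‖ :=
          Finset.sum_congr rfl (fun l _ => hgl l)
  rw [← dist_eq_norm]
  exact step.trans final

/-- multi-robot appendix bound of the paper: if some point of
some robot chain is within distance `d_min` of the operator, the team safety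
index is at most `∑ᵢ [k₁((2mᵢ+1)/2·Lⁱ + mᵢ(L_max + d_min)) + k₂ mᵢ]`. -/
theorem stmt_17 {E : Type*} [NormedAddCommGroup E] [InnerProductSpace ℝ E]
    (N : ℕ) (c : E)
    (m : Fin N → ℕ)
    (p : ∀ i : Fin N, Fin (m i + 1) → E)
    (hc : ∀ i, p i (Fin.last (m i)) = c)
    (L : Fin N → ℝ)
    (hL : ∀ i, L i = ∑ l : Fin (m i), ‖p i l.succ - p i l.castSucc‖)
    (j : Fin N) (a : Fin (m j)) (r : ℝ) (hr : r ∈ Set.Icc (0 : ℝ) 1)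
    (p_o : E) (d_min : ℝ) (hdmin : 0 ≤ d_min)
    (hclose : ‖p j a.castSucc + r • (p j a.succ - p j a.castSucc) - p_o‖ ≤ d_min)
    (Lmax : ℝ) (hLmax : Lmax = Finset.univ.sup' ⟨j, Finset.mem_univ j⟩ L)
    (k₁ k₂ : ℝ) (hk₁ : 0 ≤ k₁) (hk₂ : 0 ≤ k₂)
    (v : ∀ i : Fin N, Fin (m i) → ℝ → ℝ) (hv : ∀ i l, Measurable (v i l))
    (F : ℝ)
    (hF : F = ∑ i : Fin N, ∑ l : Fin (m i), ∫ s in (0 : ℝ)..1,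
        (k₁ * ‖p i l.castSucc + s • (p i l.succ - p i l.castSucc) - p_o‖
          + k₂ * Real.tanh (v i l s))) :
    F ≤ ∑ i : Fin N,
        (k₁ * ((2 * (m i : ℝ) + 1) / 2 * L i + (m i : ℝ) * (Lmax + d_min))
          + k₂ * (m i : ℝ)) := by
  -- the near point is within Lmax of c
  have hLj : L j ≤ Lmax := hLmax ▸ Finset.le_sup' L (Finset.mem_univ j)
  have hstar : ‖c - (p j a.castSucc + r • (p j a.succ - p j a.castSucc))‖ ≤ Lmax := by
    rw [norm_sub_rev, ← hc j]
    exact (seg_point_bound (p j) a hr).trans (by rw [← hL j]; exact hLj)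
  have hLnonneg : ∀ i, 0 ≤ L i := by
    intro i; rw [hL i]; exact Finset.sum_nonneg fun _ _ => norm_nonneg _
  rw [hF]
  apply Finset.sum_le_sum
  intro i _
  set C : ℝ := k₁ * (L i + Lmax + d_min) + k₂ with hC
  -- pointwise distance bound
  have hdist : ∀ (l : Fin (m i)) (s : ℝ), s ∈ Set.Icc (0:ℝ) 1 →
      ‖p i l.castSucc + s • (p i l.succ - p i l.castSucc) - p_o‖
        ≤ L i + Lmax + d_min := by
    intro l s hs
    set q := p i l.castSucc + s • (p i l.succ - p i l.castSucc) with hq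
    set q' := p j a.castSucc + r • (p j a.succ - p j a.castSucc) with hq'
    have h1 : ‖q - c‖ ≤ L i := by
      rw [← hc i, hL i]
      exact seg_point_bound (p i) l hs
    calc ‖q - p_o‖ = ‖(q - c) + (c - q') + (q' - p_o)‖ := by congr 1; abel
      _ ≤ ‖q - c‖ + ‖c - q'‖ + ‖q' - p_o‖ := norm_add₃_le
      _ ≤ L i + Lmax + d_min := add_le_add (add_le_add h1 hstar) hclose
  -- integrability and per-link integral bound
  have hlink : ∀ l : Fin (m i),
      (∫ s in (0:ℝ)..1, (k₁ * ‖p i l.castSucc + s • (p i l.succ - p i l.castSucc) - p_o‖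
          + k₂ * Real.tanh (v i l s))) ≤ C := by
    intro l
    have h1int : IntervalIntegrable
        (fun s : ℝ => k₁ * ‖p i l.castSucc + s • (p i l.succ - p i l.castSucc) - p_o‖)
        MeasureTheory.volume 0 1 := by
      apply Continuous.intervalIntegrable
      fun_prop
    have h2meas : Measurable fun s : ℝ => k₂ * Real.tanh (v i l s) :=
      (continuous_tanh'.measurable.comp (hv i l)).const_mul k₂
    have h2int : IntervalIntegrable (fun s : ℝ => k₂ * Real.tanh (v i l s))
        MeasureTheory.volume 0 1 := by
      rw [intervalIntegrable_iff]
      apply MeasureTheory.Integrable.mono'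
        (g := fun _ : ℝ => k₂)
        ((MeasureTheory.integrableOn_const_iff (C := k₂) (by finiteness)).mpr (Or.inr (by
          rw [Set.uIoc_of_le (by norm_num : (0:ℝ) ≤ 1)]
          exact measure_Ioc_lt_top)))
        h2meas.aestronglyMeasurable
      filter_upwards with s
      rw [Real.norm_eq_abs, abs_mul, abs_of_nonneg hk₂]
      calc k₂ * |Real.tanh (v i l s)| ≤ k₂ * 1 :=
            mul_le_mul_of_nonneg_left (abs_tanh_le_one _) hk₂
        _ = k₂ := mul_one k₂
    have hCint : IntervalIntegrable (fun _ : ℝ => C) MeasureTheory.volume 0 1 :=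
      intervalIntegrable_const
    calc (∫ s in (0:ℝ)..1, (k₁ * ‖p i l.castSucc + s • (p i l.succ - p i l.castSucc) - p_o‖
            + k₂ * Real.tanh (v i l s)))
        ≤ ∫ _ in (0:ℝ)..1, C := by
          apply intervalIntegral.integral_mono_on (by norm_num) (h1int.add h2int) hCint
          intro s hs
          have hb := hdist l s hs
          have ht : k₂ * Real.tanh (v i l s) ≤ k₂ := by
            calc k₂ * Real.tanh (v i l s) ≤ k₂ * 1 :=
                  mul_le_mul_of_nonneg_left ((abs_le.mp (abs_tanh_le_one _)).2) hk₂
              _ = k₂ := mul_one k₂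
          have hn : k₁ * ‖p i l.castSucc + s • (p i l.succ - p i l.castSucc) - p_o‖
              ≤ k₁ * (L i + Lmax + d_min) := mul_le_mul_of_nonneg_left hb hk₁
          rw [hC]; linarith
      _ = C := by simp
  calc (∑ l : Fin (m i), ∫ s in (0:ℝ)..1,
          (k₁ * ‖p i l.castSucc + s • (p i l.succ - p i l.castSucc) - p_o‖
            + k₂ * Real.tanh (v i l s)))
      ≤ ∑ _l : Fin (m i), C := Finset.sum_le_sum fun l _ => hlink l
    _ = (m i : ℝ) * C := by
        rw [Finset.sum_const, Finset.card_univ, Fintype.card_fin, nsmul_eq_mul]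
    _ ≤ k₁ * ((2 * (m i : ℝ) + 1) / 2 * L i + (m i : ℝ) * (Lmax + d_min)) + k₂ * (m i : ℝ) := by
        rw [hC]
        have := hLnonneg i
        have : (0:ℝ) ≤ (m i : ℝ) := Nat.cast_nonneg _
        nlinarith [hLnonneg i, mul_nonneg hk₁ (hLnonneg i)]
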